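/- arXiv:quant-ph/0601150 — 3 statements merged into one kernel-verified Lean document; each statement's English description precedes it below -/
import Mathlib

section
/- Let W be a unitary operator on ℂ^d and k ≥ 1 an integer. Then Θ(W^⊗k) ≥ min(k·Θ(W), π), where W^⊗k is the k-fold tensor power of W. -/
open Complex Matrix

/-!
Fix an eigenvalue `z₀ = e^{iθ₀}` of `W` and write every eigenvalue as `z = z₀ e^{iδ}` with
`|δ| ≤ π`. The eigenvalues `z^j z₀^{k-j}` (`j = 0, …, k`) of `W^{⊗k}` walk around the circle
from `z₀^k = e^{it₀}` in steps of angle `δ`. Suppose the spectrum of `W^{⊗k}` lies in an arc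
`[a, a + L]` with `L < π`. Consecutive angles `t₀ + jδ` differ by at most `π`, so the next one is
within `L + π < 2π` of its representative in the arc, hence equal to it: inductively all of them
lie in the arc. Taking `j = k` confines `kδ` to an interval of length `L`, so the spectrum of `W`
lies in an arc of length `L / k`.
-/

/-- The length of the smallest closed arc of the unit circle containing the spectrum
of a matrix. -/
noncomputable def arcTheta {n : Type*} [Fintype n] [DecidableEq n]
    (U : Matrix n n ℂ) : ℝ :=
  sInf {L : ℝ | 0 ≤ L ∧ ∃ a : ℝ, ∀ z ∈ spectrum ℂ U,
    ∃ t ∈ Set.Icc a (a + L), z = Complex.exp (Complex.I * t)}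

/-- The k-fold tensor (Kronecker) power of a matrix, acting on (ℂ^d)^{⊗k}. -/
noncomputable def tensorPow {d : ℕ} (W : Matrix (Fin d) (Fin d) ℂ) (k : ℕ) :
    Matrix (Fin k → Fin d) (Fin k → Fin d) ℂ :=
  fun x y => ∏ i : Fin k, W (x i) (y i)

namespace Matrix

variable {n K : Type*} [Fintype n] [DecidableEq n] [Field K]

theorem mem_spectrum_iff_exists_mulVec_eq_smul {A : Matrix n n K} {μ : K} :
    μ ∈ spectrum K A ↔ ∃ v ≠ 0, A *ᵥ v = μ • v := by
  rw [← spectrum_toLin', ← Module.End.hasEigenvalue_iff_mem_spectrum]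
  constructor
  · intro h
    obtain ⟨v, hv⟩ := h.exists_hasEigenvector
    exact ⟨v, hv.2, by simpa [Module.End.mem_eigenspace_iff] using hv.1⟩
  · rintro ⟨v, hv, hAv⟩
    exact Module.End.hasEigenvalue_of_hasEigenvector
      ⟨by simpa [Module.End.mem_eigenspace_iff] using hAv, hv⟩

open scoped Matrix.Norms.L2Operator in
theorem spectrum_subset_sphere_of_mem_unitaryGroup {U : Matrix n n ℂ}
    (hU : U ∈ unitaryGroup n ℂ) : spectrum ℂ U ⊆ Metric.sphere 0 1 :=
  spectrum.subset_circle_of_unitary hU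

end Matrix

section TensorPow

variable {d k : ℕ}

theorem tensorPow_mul (A B : Matrix (Fin d) (Fin d) ℂ) (k : ℕ) :
    tensorPow (A * B) k = tensorPow A k * tensorPow B k := by
  ext x y
  simp only [tensorPow, mul_apply, ← Finset.prod_mul_distrib]
  exact Fintype.prod_sum fun i j => A (x i) j * B j (y i)

theorem tensorPow_one (k : ℕ) : tensorPow (1 : Matrix (Fin d) (Fin d) ℂ) k = 1 := by
  ext x y
  by_cases hxy : x = y
  · subst hxy
    simp [tensorPow]
  · obtain ⟨i, hi⟩ := Function.ne_iff.mp hxy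
    rw [one_apply_ne hxy]
    exact Finset.prod_eq_zero (Finset.mem_univ i) (one_apply_ne hi)

theorem tensorPow_conjTranspose (A : Matrix (Fin d) (Fin d) ℂ) (k : ℕ) :
    tensorPow Aᴴ k = (tensorPow A k)ᴴ := by
  ext x y
  simp [tensorPow, conjTranspose_apply, star_prod]

theorem tensorPow_mem_unitaryGroup {W : Matrix (Fin d) (Fin d) ℂ}
    (hW : W ∈ unitaryGroup (Fin d) ℂ) (k : ℕ) :
    tensorPow W k ∈ unitaryGroup (Fin k → Fin d) ℂ := by
  rw [mem_unitaryGroup_iff'] at hW ⊢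
  rw [star_eq_conjTranspose, ← tensorPow_conjTranspose, ← tensorPow_mul,
    ← star_eq_conjTranspose, hW, tensorPow_one]

theorem tensorPow_mulVec_prod (W : Matrix (Fin d) (Fin d) ℂ) (v : Fin k → Fin d → ℂ) :
    tensorPow W k *ᵥ (fun x => ∏ i, v i (x i)) = fun x => ∏ i, (W *ᵥ v i) (x i) := by
  ext x
  simp only [mulVec, dotProduct, tensorPow, ← Finset.prod_mul_distrib]
  exact (Fintype.prod_sum fun i j => W (x i) j * v i j).symm

theorem prod_mem_spectrum_tensorPow {W : Matrix (Fin d) (Fin d) ℂ} {μ : Fin k → ℂ}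
    (hμ : ∀ i, μ i ∈ spectrum ℂ W) : ∏ i, μ i ∈ spectrum ℂ (tensorPow W k) := by
  simp only [mem_spectrum_iff_exists_mulVec_eq_smul] at hμ ⊢
  choose v hv hWv using hμ
  refine ⟨fun x => ∏ i, v i (x i), ?_, ?_⟩
  · choose x hx using fun i => Function.ne_iff.mp (hv i)
    exact Function.ne_iff.mpr ⟨x, Finset.prod_ne_zero_iff.mpr fun i _ => hx i⟩
  · ext x
    simp [tensorPow_mulVec_prod, hWv, Finset.prod_mul_distrib]

theorem pow_mul_pow_mem_spectrum_tensorPow {W : Matrix (Fin d) (Fin d) ℂ} {z w : ℂ}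
    (hz : z ∈ spectrum ℂ W) (hw : w ∈ spectrum ℂ W) {j : ℕ} (hj : j ≤ k) :
    z ^ j * w ^ (k - j) ∈ spectrum ℂ (tensorPow W k) := by
  have h := prod_mem_spectrum_tensorPow (k := k) (μ := fun i => if (i : ℕ) < j then z else w)
    fun i => by split_ifs <;> assumption
  rwa [Finset.prod_ite, Finset.prod_const, Finset.prod_const, Fin.card_filter_val_lt,
    Finset.filter_not, Finset.card_sdiff, Finset.inter_univ, Fin.card_filter_val_lt,
    Finset.card_univ, Fintype.card_fin, min_eq_right hj] at h

end TensorPow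

def ArcCovers (S : Set ℂ) (a L : ℝ) : Prop :=
  ∀ z ∈ S, ∃ t ∈ Set.Icc a (a + L), z = exp (I * t)

theorem exp_I_mul_arg {z : ℂ} (hz : ‖z‖ = 1) : exp (I * arg z) = z := by
  simpa [hz, mul_comm] using norm_mul_exp_arg_mul_I z

theorem arcCovers_of_subset_sphere {S : Set ℂ} (hS : S ⊆ Metric.sphere 0 1) :
    ArcCovers S (-Real.pi) (2 * Real.pi) := fun z hz =>
  ⟨arg z, ⟨(neg_pi_lt_arg z).le, by linarith [arg_le_pi z]⟩,
    (exp_I_mul_arg (mem_sphere_zero_iff_norm.mp (hS hz))).symm⟩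

theorem eq_of_exp_I_mul_eq {s t : ℝ} (h : exp (I * s) = exp (I * t))
    (hst : |s - t| < 2 * Real.pi) : s = t := by
  obtain ⟨n, hn⟩ := exp_eq_exp_iff_exists_int.mp h
  have hst_eq : s = t + n * (2 * Real.pi) := by simpa using congrArg im hn
  have hn_abs : |(n : ℝ)| < 1 := by
    rw [hst_eq, add_sub_cancel_left, abs_mul, abs_of_pos Real.two_pi_pos] at hst
    nlinarith [Real.pi_pos]
  have hn_zero : n = 0 := Int.abs_lt_one_iff.mp (by exact_mod_cast hn_abs)
  simpa [hn_zero] using hst_eq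

theorem ArcCovers.add_nat_mul_mem_Icc {S : Set ℂ} {a L t₀ δ : ℝ} (hS : ArcCovers S a L)
    (hL : L < Real.pi) (hδ : |δ| ≤ Real.pi) (ht₀ : t₀ ∈ Set.Icc a (a + L)) {m : ℕ}
    (hwalk : ∀ j ≤ m, exp (I * (t₀ + j * δ : ℝ)) ∈ S) :
    t₀ + m * δ ∈ Set.Icc a (a + L) := by
  induction m with
  | zero => simpa using ht₀
  | succ m ih =>
    have hs := ih fun j hj => hwalk j (hj.trans m.le_succ)
    obtain ⟨t, ht, he⟩ := hS _ (hwalk (m + 1) le_rfl)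
    have hclose : |t₀ + (m + 1 : ℕ) * δ - t| < 2 * Real.pi := by
      rw [abs_lt]
      push_cast
      constructor <;> cases abs_le.mp hδ <;> linarith [hs.1, hs.2, ht.1, ht.2]
    rwa [eq_of_exp_I_mul_eq he hclose]

section ArcTheta

variable {n : Type*} [Fintype n] [DecidableEq n] {U : Matrix n n ℂ}

theorem arcTheta_le {a L : ℝ} (hL : 0 ≤ L) (h : ArcCovers (spectrum ℂ U) a L) :
    arcTheta U ≤ L :=
  csInf_le ⟨0, fun _ hx => hx.1⟩ ⟨hL, a, h⟩

theorem le_arcTheta {c : ℝ} (hU : spectrum ℂ U ⊆ Metric.sphere 0 1)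
    (h : ∀ a L, 0 ≤ L → ArcCovers (spectrum ℂ U) a L → c ≤ L) : c ≤ arcTheta U :=
  le_csInf ⟨_, Real.two_pi_pos.le, _, arcCovers_of_subset_sphere hU⟩
    fun _ ⟨hL, a, ha⟩ => h a _ hL ha

end ArcTheta

theorem exists_arcCovers_div_of_arcCovers_tensorPow {d k : ℕ} {W : Matrix (Fin d) (Fin d) ℂ}
    (hW : W ∈ unitaryGroup (Fin d) ℂ) (hk : 0 < k) {a L : ℝ} (hL : L < Real.pi)
    (hcov : ArcCovers (spectrum ℂ (tensorPow W k)) a L) :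
    ∃ a', ArcCovers (spectrum ℂ W) a' (L / k) := by
  have hsphere := spectrum_subset_sphere_of_mem_unitaryGroup hW
  have hnorm : ∀ z ∈ spectrum ℂ W, ‖z‖ = 1 := fun z hz => by simpa using hsphere hz
  obtain hempty | ⟨z₀, hz₀⟩ := (spectrum ℂ W).eq_empty_or_nonempty
  · exact ⟨0, by simp [ArcCovers, hempty]⟩
  have hz₀ne : z₀ ≠ 0 := norm_ne_zero_iff.mp ((hnorm z₀ hz₀).trans_ne one_ne_zero)
  obtain ⟨t₀, ht₀, he₀⟩ :=
    hcov _ (by simpa using pow_mul_pow_mem_spectrum_tensorPow hz₀ hz₀ hk.le)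
  refine ⟨arg z₀ + (a - t₀) / k, fun z hz => ?_⟩
  set ζ := z / z₀
  have hζ : exp (I * arg ζ) = ζ := exp_I_mul_arg (by simp [ζ, hnorm z hz, hnorm z₀ hz₀])
  have hwalk (j : ℕ) (hj : j ≤ k) :
      exp (I * (t₀ + j * arg ζ : ℝ)) ∈ spectrum ℂ (tensorPow W k) := by
    convert pow_mul_pow_mem_spectrum_tensorPow hz hz₀ hj using 1
    calc exp (I * (t₀ + j * arg ζ : ℝ)) = exp (I * t₀) * exp (I * arg ζ) ^ j := by
          rw [← exp_nat_mul, ← exp_add]; push_cast; ring_nf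
      _ = z₀ ^ (k - j) * z₀ ^ j * ζ ^ j := by rw [← he₀, hζ, ← pow_add, Nat.sub_add_cancel hj]
      _ = z ^ j * z₀ ^ (k - j) := by rw [mul_assoc, ← mul_pow, mul_div_cancel₀ _ hz₀ne, mul_comm]
  have hk' : (0 : ℝ) < k := Nat.cast_pos.mpr hk
  obtain ⟨hlo, hhi⟩ := hcov.add_nat_mul_mem_Icc hL (abs_arg_le_pi ζ) ht₀ hwalk
  refine ⟨arg z₀ + arg ζ, ⟨?_, ?_⟩, ?_⟩
  · have : (a - t₀) / k ≤ arg ζ := by rw [div_le_iff₀ hk']; linarith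
    linarith
  · have : arg ζ ≤ (a - t₀) / k + L / k := by rw [← add_div, le_div_iff₀ hk']; linarith
    linarith
  · rw [ofReal_add, mul_add, exp_add, exp_I_mul_arg (hnorm z₀ hz₀), hζ, mul_div_cancel₀ _ hz₀ne]

theorem theta_tensorPow_ge {d : ℕ} (W : Matrix (Fin d) (Fin d) ℂ)
    (hW : W ∈ Matrix.unitaryGroup (Fin d) ℂ) (k : ℕ) (hk : 1 ≤ k) :
    min (k * arcTheta W) Real.pi ≤ arcTheta (tensorPow W k) := by
  refine le_arcTheta (spectrum_subset_sphere_of_mem_unitaryGroup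
    (tensorPow_mem_unitaryGroup hW k)) fun a L hL hcov => ?_
  obtain hπL | hLπ := le_or_gt Real.pi L
  · exact min_le_of_right_le hπL
  obtain ⟨a', ha'⟩ := exists_arcCovers_div_of_arcCovers_tensorPow hW hk hLπ hcov
  have hk' : (0 : ℝ) < k := Nat.cast_pos.mpr hk
  calc min (k * arcTheta W) Real.pi ≤ k * arcTheta W := min_le_left _ _
    _ ≤ k * (L / k) := by gcongr; exact arcTheta_le (by positivity) ha'
    _ = L := by field_simp
end

section
/- Let θ ∈ (0, π), N = ⌈π/θ⌉, and U = diag(e^{iθ}, 1) acting on ℂ². Let α = arctan(√(−cos(Nθ/2)/cos((N−2)θ/2))) and let X be the real rotation matrix by angle α, i.e., X = [[cos α, −sin α],[sin α, cos α]]. Then tr(X† U X U^{N−1}) = 0. Equivalently, cos²α·e^{iNθ} + sin²α·e^{i(N−1)θ} + sin²α·e^{iθ} + cos²α = 0. -/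
open Complex Matrix Real

theorem rotation_trace_zero (θ : ℝ) (hθ : θ ∈ Set.Ioo 0 Real.pi)
    (N : ℕ) (hN : N = ⌈Real.pi / θ⌉₊)
    (α : ℝ)
    (hα : α = Real.arctan (Real.sqrt (-(Real.cos (N * θ / 2)) / Real.cos (((N : ℝ) - 2) * θ / 2))))
    (U : Matrix (Fin 2) (Fin 2) ℂ) (hU : U = !![Complex.exp (Complex.I * θ), 0; 0, 1])
    (X : Matrix (Fin 2) (Fin 2) ℂ)
    (hX : X = !![(Real.cos α : ℂ), -(Real.sin α : ℂ); (Real.sin α : ℂ), (Real.cos α : ℂ)]) :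
    (Xᴴ * U * X * U ^ (N - 1)).trace = 0 ∧
    (Real.cos α : ℂ) ^ 2 * Complex.exp (Complex.I * (N * θ))
      + (Real.sin α : ℂ) ^ 2 * Complex.exp (Complex.I * (((N : ℝ) - 1) * θ))
      + (Real.sin α : ℂ) ^ 2 * Complex.exp (Complex.I * θ)
      + (Real.cos α : ℂ) ^ 2 = 0 := by
  obtain ⟨hθ0, hθπ⟩ := hθ
  set x : ℝ := (N : ℝ) * θ / 2 with hxdef
  set y : ℝ := ((N : ℝ) - 2) * θ / 2 with hydef
  have hπθ : Real.pi / θ ≤ (N : ℝ) := hN ▸ Nat.le_ceil _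
  have hπmul : Real.pi / θ * θ = Real.pi := div_mul_cancel₀ _ hθ0.ne'
  have hNθ : Real.pi ≤ (N : ℝ) * θ := by nlinarith
  have hN2 : 2 ≤ N := by
    by_contra h
    push_neg at h
    have : (N : ℝ) ≤ 1 := by exact_mod_cast Nat.lt_succ_iff.mp h
    nlinarith
  have hN2' : (2 : ℝ) ≤ (N : ℝ) := by exact_mod_cast hN2
  have hceil : (N : ℝ) < Real.pi / θ + 1 := by
    rw [hN]
    exact Nat.ceil_lt_add_one (by positivity)
  have hN1θ : ((N : ℝ) - 1) * θ < Real.pi := by nlinarith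
  have hcosy : 0 < Real.cos y := by
    apply Real.cos_pos_of_mem_Ioo
    constructor
    · have : 0 ≤ y := by rw [hydef]; nlinarith
      nlinarith [Real.pi_pos]
    · rw [hydef]; nlinarith
  have hcosx : Real.cos x ≤ 0 := by
    apply Real.cos_nonpos_of_pi_div_two_le_of_le
    · rw [hxdef]; nlinarith
    · rw [hxdef]; nlinarith [Real.pi_pos]
  set t : ℝ := -Real.cos x / Real.cos y with htdef
  have ht : 0 ≤ t := div_nonneg (by linarith) hcosy.le
  have htan : Real.tan α = Real.sqrt t := by rw [hα]; exact Real.tan_arctan _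
  have htan2 : Real.tan α ^ 2 = t := by rw [htan, Real.sq_sqrt ht]
  have hcosα : 0 < Real.cos α := by
    rw [hα, Real.cos_arctan]; positivity
  have hsin : Real.sin α = Real.tan α * Real.cos α := by
    rw [Real.tan_eq_sin_div_cos]; field_simp
  have h' : Real.tan α ^ 2 * Real.cos y = -Real.cos x := by
    rw [htan2, htdef]; field_simp
  have key : Real.cos α ^ 2 * Real.cos x + Real.sin α ^ 2 * Real.cos y = 0 := by
    rw [hsin]
    linear_combination Real.cos α ^ 2 * h'
  have hA : Real.cos α ^ 2 * Real.cos (x + x) + Real.sin α ^ 2 * Real.cos (x + y)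
      + Real.sin α ^ 2 * Real.cos (x - y) + Real.cos α ^ 2 = 0 := by
    rw [Real.cos_add, Real.cos_add, Real.cos_sub]
    linear_combination 2 * Real.cos x * key -
      Real.cos α ^ 2 * (Real.sin_sq_add_cos_sq x)
  have hB : Real.cos α ^ 2 * Real.sin (x + x) + Real.sin α ^ 2 * Real.sin (x + y)
      + Real.sin α ^ 2 * Real.sin (x - y) = 0 := by
    rw [Real.sin_add, Real.sin_add, Real.sin_sub]
    linear_combination 2 * Real.sin x * key
  have hE : ∀ r : ℝ, Complex.exp (Complex.I * r)
      = (Real.cos r : ℂ) + (Real.sin r : ℂ) * Complex.I := fun r => by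
    rw [mul_comm, Complex.exp_mul_I, Complex.ofReal_cos, Complex.ofReal_sin]
  have main : (Real.cos α : ℂ) ^ 2 * Complex.exp (Complex.I * (N * θ))
      + (Real.sin α : ℂ) ^ 2 * Complex.exp (Complex.I * (((N : ℝ) - 1) * θ))
      + (Real.sin α : ℂ) ^ 2 * Complex.exp (Complex.I * θ)
      + (Real.cos α : ℂ) ^ 2 = 0 := by
    have arg1 : Complex.I * ((N : ℂ) * (θ : ℂ)) = Complex.I * ((x + x : ℝ) : ℂ) := by
      push_cast [hxdef]; ring
    have arg2 : Complex.I * ((((N : ℝ) : ℂ) - 1) * (θ : ℂ)) = Complex.I * ((x + y : ℝ) : ℂ) := by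
      push_cast [hxdef, hydef]; ring
    have arg3 : Complex.I * (θ : ℂ) = Complex.I * ((x - y : ℝ) : ℂ) := by
      push_cast [hxdef, hydef]; ring
    rw [show Complex.I * (N * θ) = Complex.I * ((x + x : ℝ) : ℂ) from arg1,
      show Complex.I * (((N : ℝ) - 1) * θ) = Complex.I * ((x + y : ℝ) : ℂ) from arg2,
      show Complex.I * (θ : ℂ) = Complex.I * ((x - y : ℝ) : ℂ) from arg3,
      hE, hE, hE]
    have hAc : ((Real.cos α ^ 2 * Real.cos (x + x) + Real.sin α ^ 2 * Real.cos (x + y)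
      + Real.sin α ^ 2 * Real.cos (x - y) + Real.cos α ^ 2 : ℝ) : ℂ) = 0 := by
      exact_mod_cast hA
    have hBc : ((Real.cos α ^ 2 * Real.sin (x + x) + Real.sin α ^ 2 * Real.sin (x + y)
      + Real.sin α ^ 2 * Real.sin (x - y) : ℝ) : ℂ) = 0 := by
      exact_mod_cast hB
    push_cast [-Complex.ofReal_cos, -Complex.ofReal_sin] at hAc hBc
    linear_combination hAc + Complex.I * hBc
  refine ⟨?_, main⟩
  -- trace part
  have hN1 : 1 ≤ N := by omega
  set e : ℂ := Complex.exp (Complex.I * θ) with hedef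
  have epow : e ^ (N - 1) = Complex.exp (Complex.I * ((((N : ℝ) : ℂ) - 1) * θ)) := by
    rw [hedef, ← Complex.exp_nat_mul]
    congr 1
    push_cast [Nat.cast_sub hN1]
    ring
  have epowN : e * e ^ (N - 1) = Complex.exp (Complex.I * (N * θ)) := by
    rw [epow, hedef, ← Complex.exp_add]
    congr 1
    push_cast
    ring
  have hXH : Xᴴ = !![(Real.cos α : ℂ), (Real.sin α : ℂ); -(Real.sin α : ℂ), (Real.cos α : ℂ)] := by
    subst hX
    ext i j
    fin_cases i <;> fin_cases j <;>
      simp [Matrix.conjTranspose_apply, ← Complex.ofReal_cos, ← Complex.ofReal_sin,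
        Complex.conj_ofReal]
  have hpow : ∀ k : ℕ, (!![e, 0; 0, 1] : Matrix (Fin 2) (Fin 2) ℂ) ^ k = !![e ^ k, 0; 0, 1] := by
    intro k
    induction k with
    | zero => simp [Matrix.one_fin_two]
    | succ n ih => rw [pow_succ, ih, Matrix.mul_fin_two]; norm_num [pow_succ]
  rw [hXH, hU, hX, hpow, Matrix.mul_fin_two, Matrix.mul_fin_two, Matrix.mul_fin_two,
    Matrix.trace_fin_two]
  norm_num
  have arg2' : Complex.exp (Complex.I * (((N : ℝ) - 1) * θ))
      = Complex.exp (Complex.I * ((((N : ℝ) : ℂ) - 1) * θ)) := by norm_cast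
  rw [arg2'] at main
  simp only [Complex.ofReal_cos, Complex.ofReal_sin] at main ⊢
  linear_combination main + (Complex.cos (α : ℂ)) ^ 2 * epowN + (Complex.sin (α : ℂ)) ^ 2 * epow
end

section
/- With the generalized Pauli operators σ_{mn} on ℂ^d and the states |m⟩⊗|n̄⟩ as defined, the d² vectors {(σ_{mn}⊗σ_{mn})(|0⟩⊗|0̄⟩) : 0 ≤ m,n ≤ d−1} form an orthonormal set in ℂ^d⊗ℂ^d. Hence the d² generalized Pauli operators can be perfectly distinguished using two sequential applications. -/
/-! `σ_{mn}` sends `|0⟩` to `|m⟩` and the constant vector `|0̄⟩` to the Fourier vector `|n̄⟩`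
translated by `m`. The inner product of two product vectors is the product of the inner products,
so the first tensor factor forces `m = m'`; the common translation then drops out, and
orthonormality of the Fourier basis (a geometric sum of a `d`-th root of unity) forces `n = n'`. -/

open Complex Matrix Kronecker

variable (d : ℕ)

/-- The primitive d-th root of unity ω = e^{2πi/d}. -/
noncomputable def omega : ℂ := Complex.exp (2 * Real.pi * Complex.I / d)

/-- Generalized Pauli operator σ_{mn} = Σ_k ω^{nk} |k+m⟩⟨k| (indices mod d). -/
noncomputable def pauli (m n : Fin d) : Matrix (Fin d) (Fin d) ℂ :=
  fun j k => if j = k + m then omega d ^ ((n : ℕ) * (k : ℕ)) else 0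

/-- Standard basis vector |m⟩. -/
def ket (m : Fin d) : Fin d → ℂ := fun j => if j = m then 1 else 0

/-- Fourier basis vector |l̄⟩ = (1/√d) Σ_k ω^{kl} |k⟩. -/
noncomputable def ketBar (l : Fin d) : Fin d → ℂ :=
  fun k => (1 / Real.sqrt d : ℂ) * omega d ^ ((k : ℕ) * (l : ℕ))

theorem Matrix.kronecker_mulVec_mul {R l m p q : Type*} [CommSemiring R] [Fintype m] [Fintype q]
    (A : Matrix l m R) (B : Matrix p q R) (u : m → R) (v : q → R) :
    (A ⊗ₖ B) *ᵥ (fun x : m × q => u x.1 * v x.2) = fun y => (A *ᵥ u) y.1 * (B *ᵥ v) y.2 := by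
  ext ⟨i, j⟩
  simp only [mulVec, dotProduct, kroneckerMap_apply, Fintype.sum_prod_type, Finset.sum_mul_sum]
  exact Finset.sum_congr rfl fun _ _ => Finset.sum_congr rfl fun _ _ => by ring

theorem Matrix.star_mul_dotProduct_mul {R m n : Type*} [CommSemiring R] [StarRing R]
    [Fintype m] [Fintype n] (a c : m → R) (b e : n → R) :
    star (fun x : m × n => a x.1 * b x.2) ⬝ᵥ (fun x => c x.1 * e x.2)
      = (star a ⬝ᵥ c) * (star b ⬝ᵥ e) := by
  simp only [dotProduct, Pi.star_apply, star_mul', Fintype.sum_prod_type, Finset.sum_mul_sum]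
  exact Finset.sum_congr rfl fun _ _ => Finset.sum_congr rfl fun _ _ => by ring

theorem geom_sum_eq_zero_of_pow_eq_one {K : Type*} [Field K] {ζ : K} {n : ℕ}
    (hζ : ζ ^ n = 1) (h1 : ζ ≠ 1) : ∑ i ∈ Finset.range n, ζ ^ i = 0 := by
  rw [geom_sum_eq h1, hζ, sub_self, zero_div]

theorem omega_isPrimitiveRoot [NeZero d] : IsPrimitiveRoot (omega d) d :=
  Complex.isPrimitiveRoot_exp d (NeZero.ne d)

theorem star_ket_dotProduct_ket (m m' : Fin d) :
    star (ket d m) ⬝ᵥ ket d m' = if m = m' then 1 else 0 := by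
  simp [ket, dotProduct, eq_comm]

theorem IsPrimitiveRoot.sum_pow_inv_mul_pow {K : Type*} [Field K] {ω : K} {n : ℕ}
    (hω : IsPrimitiveRoot ω n) (i j : Fin n) :
    ∑ k : Fin n, ((ω ^ (i : ℕ))⁻¹ * ω ^ (j : ℕ)) ^ (k : ℕ) = if i = j then (n : K) else 0 := by
  set ζ := (ω ^ (i : ℕ))⁻¹ * ω ^ (j : ℕ)
  have hζ1 : ζ = 1 ↔ i = j := by
    rw [inv_mul_eq_one₀ (pow_ne_zero _ (hω.ne_zero i.pos.ne'))]
    exact ⟨fun h => Fin.ext (hω.pow_inj i.isLt j.isLt h), fun h => h ▸ rfl⟩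
  have hζn : ζ ^ n = 1 := by
    have hpow : ∀ k : ℕ, (ω ^ k) ^ n = 1 := fun k => by
      rw [← pow_mul, mul_comm, pow_mul, hω.pow_eq_one, one_pow]
    rw [mul_pow, inv_pow, hpow, hpow, inv_one, one_mul]
  rw [Fin.sum_univ_eq_sum_range (ζ ^ ·)]
  split_ifs with h
  · simp [hζ1.2 h]
  · exact geom_sum_eq_zero_of_pow_eq_one hζn (hζ1.not.2 h)

theorem star_ketBar_dotProduct_ketBar [NeZero d] (n n' : Fin d) :
    star (ketBar d n) ⬝ᵥ ketBar d n' = if n = n' then 1 else 0 := by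
  have hω := omega_isPrimitiveRoot d
  have hsq : ((Real.sqrt d : ℝ) : ℂ) * (Real.sqrt d : ℝ) = d := by
    rw [← Complex.ofReal_mul, Real.mul_self_sqrt (Nat.cast_nonneg d), Complex.ofReal_natCast]
  have hterm : ∀ k : Fin d, star (ketBar d n k) * ketBar d n' k
      = (d : ℂ)⁻¹ * ((omega d ^ (n : ℕ))⁻¹ * omega d ^ (n' : ℕ)) ^ (k : ℕ) := fun k => by
    simp only [ketBar, star_mul', star_div₀, star_one, Complex.star_def, Complex.conj_ofReal,
      map_pow, ← Complex.inv_eq_conj (hω.norm'_eq_one (NeZero.ne d)), mul_pow, inv_pow, ← pow_mul]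
    rw [← hsq]
    ring
  simp only [dotProduct, Pi.star_apply, hterm, ← Finset.mul_sum, hω.sum_pow_inv_mul_pow]
  split_ifs
  · exact inv_mul_cancel₀ (Nat.cast_ne_zero.2 (NeZero.ne d))
  · exact mul_zero _

theorem pauli_mulVec [NeZero d] (m n : Fin d) (v : Fin d → ℂ) :
    pauli d m n *ᵥ v = fun j => omega d ^ ((n : ℕ) * ((j - m : Fin d) : ℕ)) * v (j - m) := by
  ext j
  simp only [mulVec, dotProduct, pauli, ite_mul, zero_mul, eq_comm (a := j), ← eq_sub_iff_add_eq,
    Finset.sum_ite_eq', Finset.mem_univ, if_true]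

theorem pauli_mulVec_ket_zero [NeZero d] (m n : Fin d) : pauli d m n *ᵥ ket d 0 = ket d m := by
  ext j
  simp only [pauli_mulVec, ket, sub_eq_zero, mul_ite, mul_one, mul_zero]
  split_ifs with h <;> simp [h]

theorem pauli_mulVec_ketBar_zero [NeZero d] (m n : Fin d) :
    pauli d m n *ᵥ ketBar d 0 = ketBar d n ∘ Equiv.subRight m := by
  ext j
  simp [pauli_mulVec, ketBar, mul_comm]

theorem pauli_outputs_orthonormal (hd : 0 < d) (m n m' n' : Fin d) :
    star ((pauli d m n ⊗ₖ pauli d m n) *ᵥ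
        (fun p : Fin d × Fin d => ket d (⟨0, hd⟩ : Fin d) p.1 * ketBar d (⟨0, hd⟩ : Fin d) p.2)) ⬝ᵥ
      ((pauli d m' n' ⊗ₖ pauli d m' n') *ᵥ
        (fun p : Fin d × Fin d => ket d (⟨0, hd⟩ : Fin d) p.1 * ketBar d (⟨0, hd⟩ : Fin d) p.2))
      = if m = m' ∧ n = n' then 1 else 0 := by
  have : NeZero d := ⟨hd.ne'⟩
  have h0 : (⟨0, hd⟩ : Fin d) = 0 := rfl
  rw [h0, kronecker_mulVec_mul, kronecker_mulVec_mul, star_mul_dotProduct_mul,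
    pauli_mulVec_ket_zero, pauli_mulVec_ket_zero, star_ket_dotProduct_ket,
    pauli_mulVec_ketBar_zero, pauli_mulVec_ketBar_zero]
  by_cases hm : m = m'
  · subst hm
    rw [show star (ketBar d n ∘ Equiv.subRight m) = star (ketBar d n) ∘ Equiv.subRight m from rfl,
      comp_equiv_dotProduct_comp_equiv, star_ketBar_dotProduct_ketBar]
    simp
  · simp [hm]
end
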